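/- Let m : [0,L] → ℝ be C¹ with m'(x) ≥ 0 for all x ∈ [0,L] and m' not identically zero, let ε > 0, and let ũ be a positive C² solution of ε ũ'' + ũ(m(x) − ũ) = 0 on [0,L] with ũ'(0) = ũ'(L) = 0. Then ũ'(x) > 0 for all x ∈ (0,L). -/

import Mathlib

set_option maxHeartbeats 1600000

open Set Filter Topology

/-- Second derivative test: at an interior local minimum, the second derivative
(given via an explicit derivative function `f'` valid near the point) is nonnegative. -/
lemma deriv2_nonneg_of_isLocalMin {f f' : ℝ → ℝ} {x₀ d : ℝ}
    (hf : ∀ᶠ x in 𝓝 x₀, HasDerivAt f (f' x) x)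
    (hd : HasDerivAt f' d x₀)
    (hf0 : f' x₀ = 0)
    (hmin : IsLocalMin f x₀) : 0 ≤ d := by
  by_contra hlt
  push_neg at hlt
  -- slope of f' tends to d < 0, so f' < 0 just to the right of x₀
  have hslope : Tendsto (slope f' x₀) (𝓝[>] x₀) (𝓝 d) :=
    ((hasDerivAt_iff_tendsto_slope.mp hd).mono_left (nhdsWithin_mono _ (by
      intro y hy; exact ne_of_gt hy)))
  have hneg : ∀ᶠ x in 𝓝[>] x₀, f' x < 0 := by
    filter_upwards [hslope.eventually (eventually_lt_nhds hlt), self_mem_nhdsWithin]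
      with x hx hx'
    have hxpos : (0:ℝ) < x - x₀ := sub_pos.mpr hx'
    have : slope f' x₀ x < 0 := hx
    rw [slope_def_field, hf0, sub_zero, div_eq_mul_inv] at this
    nlinarith [mul_pos (inv_pos.mpr hxpos) hxpos]
  -- combine with hf, hmin on a right interval
  have hev : ∀ᶠ x in 𝓝[>] x₀, f' x < 0 ∧ HasDerivAt f (f' x) x ∧ f x₀ ≤ f x := by
    filter_upwards [hneg, nhdsWithin_le_nhds hf, nhdsWithin_le_nhds (hmin : ∀ᶠ x in _, _)]
      with x h1 h2 h3
    exact ⟨h1, h2, h3⟩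
  obtain ⟨u, hu, hsub⟩ := mem_nhdsGT_iff_exists_Ioc_subset.mp hev
  have hu' : x₀ < u := hu
  -- f is strictly decreasing on [x₀, u]
  have hanti : StrictAntiOn f (Icc x₀ u) := by
    apply strictAntiOn_of_deriv_neg (convex_Icc _ _)
    · intro x hx
      rcases eq_or_lt_of_le hx.1 with h | h
      · rw [← h]
        exact hf.self_of_nhds.continuousAt.continuousWithinAt
      · exact ((hsub ⟨h, hx.2⟩).2.1.continuousAt).continuousWithinAt
    · intro x hx
      rw [interior_Icc] at hx
      have h := hsub ⟨hx.1, le_of_lt hx.2⟩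
      rw [h.2.1.deriv]
      exact h.1
  have h1 : f u < f x₀ := hanti ⟨le_refl _, le_of_lt hu'⟩ ⟨le_of_lt hu', le_refl _⟩ hu'
  have h2 : f x₀ ≤ f u := (hsub ⟨hu', le_refl u⟩).2.2
  linarith

/-- Weak maximum principle for `ε v'' + B v' - C v ≤ 0` with `C > 0` on an interval. -/
lemma wmp {a c ε : ℝ} (hε : 0 < ε) (hac : a < c) {v v₁ v₂ B C : ℝ → ℝ}
    (hv : ContinuousOn v (Icc a c))
    (hv1 : ∀ x ∈ Ioo a c, HasDerivAt v (v₁ x) x)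
    (hv2 : ∀ x ∈ Ioo a c, HasDerivAt v₁ (v₂ x) x)
    (hC : ∀ x ∈ Ioo a c, 0 < C x)
    (hineq : ∀ x ∈ Ioo a c, ε * v₂ x + B x * v₁ x - C x * v x ≤ 0)
    (ha : 0 ≤ v a) (hc : 0 ≤ v c) : ∀ x ∈ Icc a c, 0 ≤ v x := by
  obtain ⟨y, hy, hmin⟩ := isCompact_Icc.exists_isMinOn (nonempty_Icc.mpr hac.le) hv
  intro x hx
  rcases le_or_gt 0 (v y) with h | h
  · exact le_trans h (hmin hx)
  -- v y < 0 : y is interior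
  have hy' : y ∈ Ioo a c := by
    rcases eq_or_lt_of_le hy.1 with h1 | h1
    · exact absurd (h1 ▸ ha) (not_le.mpr h)
    rcases eq_or_lt_of_le hy.2 with h2 | h2
    · exact absurd (h2 ▸ hc) (not_le.mpr h)
    exact ⟨h1, h2⟩
  have hnhds : Ioo a c ∈ 𝓝 y := (isOpen_Ioo).mem_nhds hy'
  have hloc : IsLocalMin v y := hmin.isLocalMin (mem_of_superset hnhds Ioo_subset_Icc_self)
  have hd1 : v₁ y = 0 := by rw [← (hv1 y hy').deriv]; exact hloc.deriv_eq_zero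
  have hd2 : 0 ≤ v₂ y :=
    deriv2_nonneg_of_isLocalMin (eventually_of_mem hnhds (fun x hx => hv1 x hx))
      (hv2 y hy') hd1 hloc
  have h5 := hineq y hy'
  rw [hd1, mul_zero] at h5
  nlinarith [mul_pos (hC y hy') (neg_pos.mpr h), mul_nonneg hε.le hd2]

/-- 1D Hopf-type lemma: a supersolution of `ε z'' + b z' - u z ≤ 0` (with `u > 0`)
that is nonnegative, vanishes together with its derivative at the left endpoint,
cannot be positive at the right endpoint. -/
lemma hopf {a c B U ε : ℝ} {z z₁ z₂ b u : ℝ → ℝ} (hε : 0 < ε) (hac : a < c)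
    (hz : ContinuousOn z (Icc a c))
    (hza : HasDerivAt z (z₁ a) a)
    (hz1 : ∀ x ∈ Ioo a c, HasDerivAt z (z₁ x) x)
    (hz2 : ∀ x ∈ Ioo a c, HasDerivAt z₁ (z₂ x) x)
    (hbB : ∀ x ∈ Ioo a c, |b x| ≤ B)
    (hu : ∀ x ∈ Ioo a c, 0 < u x ∧ u x ≤ U)
    (hineq : ∀ x ∈ Ioo a c, ε * z₂ x + b x * z₁ x - u x * z x ≤ 0)
    (hz0 : z a = 0) (hz1a : z₁ a = 0)
    (hznn : ∀ x ∈ Icc a c, 0 ≤ z x) (hzc : 0 < z c) : False := by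
  -- B and U are nonnegative
  have hmid : (a + c) / 2 ∈ Ioo a c := ⟨by linarith, by linarith⟩
  have hB0 : 0 ≤ B := le_trans (abs_nonneg _) (hbB _ hmid)
  have hU0 : 0 ≤ U := le_trans (hu _ hmid).1.le (hu _ hmid).2
  -- choose α large
  set α : ℝ := max 1 ((B + U + 1) / ε) with hα
  have hα1 : 1 ≤ α := le_max_left _ _
  have hα0 : 0 < α := lt_of_lt_of_le one_pos hα1
  have hεα : B + U + 1 ≤ ε * α := by
    have := le_max_right 1 ((B + U + 1) / ε)
    calc B + U + 1 = (B + U + 1) / ε * ε := by field_simp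
    _ ≤ α * ε := by nlinarith
    _ = ε * α := mul_comm _ _
  have hkey : 1 ≤ ε * α ^ 2 - B * α - U := by nlinarith
  clear_value α
  -- the barrier and its derivatives
  have hexp : ∀ x : ℝ, HasDerivAt (fun t => Real.exp (α * (t - a)))
      (Real.exp (α * (x - a)) * α) x := by
    intro x
    have h1 : HasDerivAt (fun t : ℝ => α * (t - a)) α x := by
      simpa using ((hasDerivAt_id x).sub_const a).const_mul α
    exact (Real.hasDerivAt_exp (α * (x - a))).comp x h1
  have hec : 1 < Real.exp (α * (c - a)) := by
    have : 0 < α * (c - a) := by nlinarith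
    nlinarith [Real.add_one_le_exp (α * (c - a))]
  set δ : ℝ := z c / (Real.exp (α * (c - a)) - 1) with hδ
  have hδ0 : 0 < δ := div_pos hzc (by linarith)
  have hδc : δ * (Real.exp (α * (c - a)) - 1) = z c := by
    have hne : Real.exp (α * (c - a)) - 1 ≠ 0 := by linarith
    rw [hδ]; field_simp
  clear_value δ
  set v : ℝ → ℝ := fun t => z t - δ * (Real.exp (α * (t - a)) - 1) with hv
  set v₁ : ℝ → ℝ := fun t => z₁ t - δ * (Real.exp (α * (t - a)) * α) with hv₁
  set v₂ : ℝ → ℝ := fun t => z₂ t - δ * (Real.exp (α * (t - a)) * α * α) with hv₂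
  have hbar : ∀ x : ℝ, HasDerivAt (fun t => δ * (Real.exp (α * (t - a)) - 1))
      (δ * (Real.exp (α * (x - a)) * α)) x :=
    fun x => (((hexp x).sub_const 1).const_mul δ)
  have hbar1 : ∀ x : ℝ, HasDerivAt (fun t => δ * (Real.exp (α * (t - a)) * α))
      (δ * (Real.exp (α * (x - a)) * α * α)) x := by
    intro x
    simpa [mul_comm, mul_assoc, mul_left_comm] using (((hexp x).mul_const α).const_mul δ)
  have hva : v a = 0 := by simp [hv, hz0]
  have hvc : v c = 0 := by
    simp only [hv]; linarith [hδc]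
  have hvnn : ∀ x ∈ Icc a c, 0 ≤ v x := by
    apply wmp hε hac (v₁ := v₁) (v₂ := v₂) (B := b) (C := u)
    · exact (hz.sub ((Continuous.continuousOn (by fun_prop))))
    · exact fun x hx => (hz1 x hx).sub (hbar x)
    · exact fun x hx => (hz2 x hx).sub (hbar1 x)
    · exact fun x hx => (hu x hx).1
    · intro x hx
      have he1 : 1 ≤ Real.exp (α * (x - a)) := by
        rw [← Real.exp_zero]
        apply Real.exp_le_exp.mpr
        nlinarith [hx.1]
      have hb1 : -B ≤ b x := (abs_le.mp (hbB x hx)).1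
      have hb2 : b x ≤ B := (abs_le.mp (hbB x hx)).2
      have hu1 := (hu x hx).1
      have hu2 := (hu x hx).2
      have hzx := hznn x (Ioo_subset_Icc_self hx)
      have hin := hineq x hx
      simp only [hv, hv₁, hv₂]
      set e := Real.exp (α * (x - a)) with he
      have he0 : 0 < e := Real.exp_pos _
      clear_value e
      have hbarpos : 1 ≤ ε * (e * α * α) + b x * (e * α) - u x * (e - 1) := by
        have h1 : -(B * (e * α)) ≤ b x * (e * α) := by
          nlinarith [mul_nonneg (show (0:ℝ) ≤ b x + B by linarith)
            (show (0:ℝ) ≤ e * α by positivity)]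
        have h2 : u x * (e - 1) ≤ U * e := by
          nlinarith [mul_le_mul_of_nonneg_right hu2 (show (0:ℝ) ≤ e - 1 by linarith)]
        have h3 : e * 1 ≤ e * (ε * α ^ 2 - B * α - U) :=
          mul_le_mul_of_nonneg_left hkey he0.le
        nlinarith [h1, h2, h3]
      linarith [mul_le_mul_of_nonneg_left hbarpos hδ0.le]
    · rw [hva]
    · rw [hvc]
  -- derivative of v at a is -δ * α < 0, contradicting v ≥ 0, v a = 0
  have hvda : HasDerivAt v (-(δ * α)) a := by
    have := hza.sub (hbar a)
    simp [hz1a] at this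
    exact this
  have hslope : Tendsto (slope v a) (𝓝[>] a) (𝓝 (-(δ * α))) :=
    (hasDerivAt_iff_tendsto_slope.mp hvda).mono_left
      (nhdsWithin_mono _ (fun y hy => ne_of_gt hy))
  have hev : ∀ᶠ x in 𝓝[>] a, 0 ≤ slope v a x := by
    filter_upwards [Ioc_mem_nhdsGT_of_mem ⟨le_refl a, hac⟩] with x hx
    rw [slope_def_field, hva, sub_zero]
    exact div_nonneg (hvnn x ⟨hx.1.le, hx.2⟩) (by linarith [hx.1])
  have : (0:ℝ) ≤ -(δ * α) := ge_of_tendsto hslope hev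
  nlinarith



/-- `u` is a positive solution of the logistic problem
`ε u'' + u(m(x) - u) = 0` on `[0, L]` with Neumann boundary conditions. -/
def IsLogistic (L ε : ℝ) (m : ℝ → ℝ) (u : ℝ → ℝ) : Prop :=
  ContDiffOn ℝ 2 u (Set.Icc 0 L) ∧ (∀ x ∈ Set.Icc 0 L, 0 < u x) ∧
  (∀ x ∈ Set.Icc 0 L,
    ε * iteratedDerivWithin 2 u (Set.Icc 0 L) x + u x * (m x - u x) = 0) ∧
  derivWithin u (Set.Icc 0 L) 0 = 0 ∧ derivWithin u (Set.Icc 0 L) L = 0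

/-- if `m` is C¹ with `m' ≥ 0`, `m'` not identically zero, and
`ũ` is a positive solution of the logistic problem, then `ũ' > 0` on `(0,L)`. -/
theorem stmt_12 (L ε : ℝ) (hL : 0 < L) (hε : 0 < ε) (m tu : ℝ → ℝ)
    (hm_smooth : ContDiffOn ℝ 1 m (Set.Icc 0 L))
    (hm_deriv : ∀ x ∈ Set.Icc 0 L, 0 ≤ derivWithin m (Set.Icc 0 L) x)
    (hm_ne : ∃ x ∈ Set.Icc 0 L, derivWithin m (Set.Icc 0 L) x ≠ 0)
    (htu : IsLogistic L ε m tu) :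
    ∀ x ∈ Set.Ioo 0 L, 0 < derivWithin tu (Set.Icc 0 L) x := by
  obtain ⟨hC2, hpos, hode, hd0, hdL⟩ := htu
  have hεne : ε ≠ 0 := ne_of_gt hε
  set s : Set ℝ := Set.Icc 0 L with hs
  have huniq : UniqueDiffOn ℝ s := uniqueDiffOn_Icc hL
  set w : ℝ → ℝ := fun x => derivWithin tu s x with hwdef
  have hC1w : ContDiffOn ℝ 1 w s := hC2.derivWithin huniq (by norm_num)
  have hw_cont : ContinuousOn w s := hC1w.continuousOn
  have htu_cont : ContinuousOn tu s := hC2.continuousOn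
  have htu_diff : ∀ x ∈ s, HasDerivWithinAt tu (w x) s x := fun x hx =>
    ((hC2.differentiableOn (by norm_num)) x hx).hasDerivWithinAt
  set gw : ℝ → ℝ := fun x => tu x * (tu x - m x) / ε with hgwdef
  have hw_deriv : ∀ x ∈ s, HasDerivWithinAt w (gw x) s x := by
    intro x hx
    have h1 : HasDerivWithinAt w (derivWithin w s x) s x :=
      ((hC1w.differentiableOn one_ne_zero) x hx).hasDerivWithinAt
    have h2 : iteratedDerivWithin 2 tu s x = derivWithin w s x := by
      rw [show (2:ℕ) = 1 + 1 from rfl, iteratedDerivWithin_succ]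
      exact derivWithin_congr (fun y hy => congrFun iteratedDerivWithin_one y)
        (congrFun iteratedDerivWithin_one x)
    have h3 := hode x hx
    rw [h2] at h3
    have h4 : derivWithin w s x = gw x := by
      simp only [hgwdef]
      field_simp
      linarith
    rw [← h4]
    exact h1
  set m₁ : ℝ → ℝ := fun x => derivWithin m s x with hm₁def
  have hm_diff : ∀ x ∈ s, HasDerivWithinAt m (m₁ x) s x := fun x hx =>
    ((hm_smooth.differentiableOn one_ne_zero) x hx).hasDerivWithinAt
  have hmem : ∀ x ∈ Set.Ioo 0 L, s ∈ 𝓝 x := fun x hx => Icc_mem_nhds hx.1 hx.2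
  have htu' : ∀ x ∈ Set.Ioo 0 L, HasDerivAt tu (w x) x := fun x hx =>
    (htu_diff x (Ioo_subset_Icc_self hx)).hasDerivAt (hmem x hx)
  have hw' : ∀ x ∈ Set.Ioo 0 L, HasDerivAt w (gw x) x := fun x hx =>
    (hw_deriv x (Ioo_subset_Icc_self hx)).hasDerivAt (hmem x hx)
  have hm' : ∀ x ∈ Set.Ioo 0 L, HasDerivAt m (m₁ x) x := fun x hx =>
    (hm_diff x (Ioo_subset_Icc_self hx)).hasDerivAt (hmem x hx)
  set z : ℝ → ℝ := fun x => w x / tu x with hzdef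
  set z₁ : ℝ → ℝ := fun x => (gw x * tu x - w x * w x) / tu x ^ 2 with hz₁def
  set G : ℝ → ℝ := fun x => (w x * (tu x - m x) + tu x * (w x - m₁ x)) / ε with hGdef
  set z₂ : ℝ → ℝ := fun x =>
    ((G x * tu x + gw x * w x - (gw x * w x + w x * gw x)) * tu x ^ 2 -
      (gw x * tu x - w x * w x) * (2 * tu x * w x)) / (tu x ^ 2) ^ 2 with hz₂def
  set b : ℝ → ℝ := fun x => 2 * ε * w x / tu x with hbdef
  have hz' : ∀ x ∈ Set.Ioo 0 L, HasDerivAt z (z₁ x) x := fun x hx =>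
    (hw' x hx).div (htu' x hx) (ne_of_gt (hpos x (Ioo_subset_Icc_self hx)))
  have hgw' : ∀ x ∈ Set.Ioo 0 L, HasDerivAt gw (G x) x := fun x hx =>
    (((htu' x hx).mul ((htu' x hx).sub (hm' x hx))).div_const ε)
  have hz1' : ∀ x ∈ Set.Ioo 0 L, HasDerivAt z₁ (z₂ x) x := by
    intro x hx
    have hne : tu x ≠ 0 := ne_of_gt (hpos x (Ioo_subset_Icc_self hx))
    have h1 : HasDerivAt (fun y => gw y * tu y - w y * w y)
        (G x * tu x + gw x * w x - (gw x * w x + w x * gw x)) x :=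
      ((hgw' x hx).mul (htu' x hx)).sub ((hw' x hx).mul (hw' x hx))
    have h2 : HasDerivAt (fun y => tu y ^ 2) (2 * tu x * w x) x := by
      have h := (htu' x hx).pow 2
      norm_num at h
      exact h
    exact h1.div h2 (pow_ne_zero _ hne)
  -- the key differential identity for z
  have hkey : ∀ x ∈ s, ε * z₂ x + b x * z₁ x - tu x * z x = -(m₁ x) := by
    intro x hx
    have hne : tu x ≠ 0 := ne_of_gt (hpos x hx)
    simp only [hz₂def, hbdef, hz₁def, hzdef, hGdef, hgwdef]
    field_simp
    ring
  -- z is continuous, vanishes at the endpoints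
  have hz_cont : ContinuousOn z s := hw_cont.div htu_cont (fun x hx => ne_of_gt (hpos x hx))
  have h0s : (0:ℝ) ∈ s := left_mem_Icc.mpr hL.le
  have hLs : L ∈ s := right_mem_Icc.mpr hL.le
  have hz0 : z 0 = 0 := by simp only [hzdef, hwdef]; rw [hd0]; simp
  have hzL : z L = 0 := by simp only [hzdef, hwdef]; rw [hdL]; simp
  -- Step A : z ≥ 0 on s
  have hznn : ∀ x ∈ s, 0 ≤ z x := by
    obtain ⟨y, hy, hmin⟩ := isCompact_Icc.exists_isMinOn ⟨0, h0s⟩ hz_cont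
    intro x hx
    rcases le_or_gt 0 (z y) with h | h
    · exact le_trans h (hmin hx)
    exfalso
    have hy' : y ∈ Set.Ioo 0 L := by
      constructor
      · rcases eq_or_lt_of_le hy.1 with h1 | h1
        · rw [← h1, hz0] at h; linarith
        · exact h1
      · rcases eq_or_lt_of_le hy.2 with h2 | h2
        · rw [h2, hzL] at h; linarith
        · exact h2
    have hloc : IsLocalMin z y := hmin.isLocalMin (hmem y hy')
    have hz1y : z₁ y = 0 := by rw [← (hz' y hy').deriv]; exact hloc.deriv_eq_zero
    have hz2y : 0 ≤ z₂ y := deriv2_nonneg_of_isLocalMin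
      (eventually_of_mem (isOpen_Ioo.mem_nhds hy') (fun t ht => hz' t ht))
      (hz1' y hy') hz1y hloc
    have hk := hkey y (Ioo_subset_Icc_self hy')
    have hm1y : 0 ≤ m₁ y := hm_deriv y (Ioo_subset_Icc_self hy')
    rw [hz1y, mul_zero] at hk
    nlinarith [mul_pos (hpos y (Ioo_subset_Icc_self hy')) (neg_pos.mpr h),
      mul_nonneg hε.le hz2y]
  -- global bounds for |b| and tu
  have hb_cont : ContinuousOn b s :=
    (continuousOn_const.mul hw_cont).div htu_cont (fun x hx => ne_of_gt (hpos x hx))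
  obtain ⟨xB, hxBs, hxBmax⟩ := isCompact_Icc.exists_isMaxOn ⟨0, h0s⟩ hb_cont.abs
  obtain ⟨xU, hxUs, hxUmax⟩ := isCompact_Icc.exists_isMaxOn ⟨0, h0s⟩ htu_cont
  set Bb : ℝ := |b xB| with hBbdef
  set U : ℝ := tu xU with hUdef
  have hbB : ∀ t ∈ s, |b t| ≤ Bb := fun t ht => hxBmax ht
  have hUb : ∀ t ∈ s, tu t ≤ U := fun t ht => hxUmax ht
  -- Step B
  intro x hx
  have hxs : x ∈ s := Ioo_subset_Icc_self hx
  have hnex : tu x ≠ 0 := ne_of_gt (hpos x hxs)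
  have hgoal : derivWithin tu (Set.Icc 0 L) x = w x := rfl
  rw [hgoal]
  have hwz : w x = z x * tu x := by
    simp only [hzdef]; field_simp
  rcases (hznn x hxs).lt_or_eq with hzx | hzx
  · rw [hwz]; exact mul_pos hzx (hpos x hxs)
  exfalso
  replace hzx : z x = 0 := hzx.symm
  -- z must vanish identically
  have hall : ∀ t ∈ s, z t = 0 := by
    by_contra hex
    push_neg at hex
    obtain ⟨x₁, hx₁s, hx₁⟩ := hex
    have hx₁pos : 0 < z x₁ := (hznn x₁ hx₁s).lt_of_ne (Ne.symm hx₁)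
    rcases lt_trichotomy x x₁ with hlt | heq | hgt
    · -- x < x₁ : Hopf to the right
      set K : Set ℝ := {t ∈ Icc x x₁ | z t = 0} with hK
      have hKsub : K ⊆ Icc x x₁ := fun t ht => ht.1
      have hKco : IsCompact K := by
        apply IsCompact.of_isClosed_subset (isCompact_Icc (a := x) (b := x₁)) ?_ hKsub
        have : K = Icc x x₁ ∩ z ⁻¹' {0} := by ext t; simp [hK] <;> tauto
        rw [this]
        exact ContinuousOn.preimage_isClosed_of_isClosed
          (hz_cont.mono (fun t ht => ⟨le_trans hxs.1 ht.1, le_trans ht.2 hx₁s.2⟩))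
          isClosed_Icc isClosed_singleton
      have hKne : K.Nonempty := ⟨x, ⟨⟨le_refl x, hlt.le⟩, hzx⟩⟩
      set a : ℝ := sSup K with hadef
      have haK : a ∈ K := hKco.sSup_mem hKne
      have haz : z a = 0 := haK.2
      have hax : x ≤ a := haK.1.1
      have hane : a ≠ x₁ := by
        intro h; rw [h] at haz; rw [haz] at hx₁pos; exact lt_irrefl _ hx₁pos
      have halt : a < x₁ := lt_of_le_of_ne haK.1.2 hane
      have haIoo : a ∈ Set.Ioo 0 L := ⟨lt_of_lt_of_le hx.1 hax, lt_of_lt_of_le halt hx₁s.2⟩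
      have hsub : Icc a x₁ ⊆ s := fun t ht => ⟨le_trans haIoo.1.le ht.1, le_trans ht.2 hx₁s.2⟩
      have hsubo : Ioo a x₁ ⊆ Set.Ioo 0 L := fun t ht =>
        ⟨lt_trans haIoo.1 ht.1, lt_of_lt_of_le ht.2 hx₁s.2⟩
      have hzpos : 0 < z x₁ := hx₁pos
      have hloc : IsLocalMin z a := by
        have hev : ∀ᶠ y in 𝓝 a, z a ≤ z y := by
          filter_upwards [hmem a haIoo] with t ht
          rw [haz]; exact hznn t ht
        exact hev
      have hz1a : z₁ a = 0 := by rw [← (hz' a haIoo).deriv]; exact hloc.deriv_eq_zero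
      exact hopf hε halt (hz_cont.mono hsub) (hz' a haIoo)
        (fun t ht => hz' t (hsubo ht)) (fun t ht => hz1' t (hsubo ht))
        (fun t ht => hbB t (Ioo_subset_Icc_self (hsubo ht)))
        (fun t ht => ⟨hpos t (Ioo_subset_Icc_self (hsubo ht)),
          hUb t (Ioo_subset_Icc_self (hsubo ht))⟩)
        (fun t ht => by
          rw [hkey t (Ioo_subset_Icc_self (hsubo ht))]
          simpa using hm_deriv t (Ioo_subset_Icc_self (hsubo ht)))
        haz hz1a (fun t ht => hznn t (hsub ht)) hzpos
    · rw [← heq, hzx] at hx₁pos; exact lt_irrefl _ hx₁pos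
    · -- x₁ < x : Hopf to the left, by reflection
      set K : Set ℝ := {t ∈ Icc x₁ x | z t = 0} with hK
      have hKsub : K ⊆ Icc x₁ x := fun t ht => ht.1
      have hKco : IsCompact K := by
        apply IsCompact.of_isClosed_subset (isCompact_Icc (a := x₁) (b := x)) ?_ hKsub
        have : K = Icc x₁ x ∩ z ⁻¹' {0} := by ext t; simp [hK] <;> tauto
        rw [this]
        exact ContinuousOn.preimage_isClosed_of_isClosed
          (hz_cont.mono (fun t ht => ⟨le_trans hx₁s.1 ht.1, le_trans ht.2 hxs.2⟩))
          isClosed_Icc isClosed_singleton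
      have hKne : K.Nonempty := ⟨x, ⟨⟨hgt.le, le_refl x⟩, hzx⟩⟩
      set a : ℝ := sInf K with hadef
      have haK : a ∈ K := hKco.sInf_mem hKne
      have haz : z a = 0 := haK.2
      have hax : a ≤ x := haK.1.2
      have hane : x₁ ≠ a := by
        intro h; rw [← h] at haz; rw [haz] at hx₁pos; exact lt_irrefl _ hx₁pos
      have halt : x₁ < a := lt_of_le_of_ne haK.1.1 hane
      have haIoo : a ∈ Set.Ioo 0 L := ⟨lt_of_le_of_lt hx₁s.1 halt, lt_of_le_of_lt hax hx.2⟩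
      have hsub : Icc x₁ a ⊆ s := fun t ht => ⟨le_trans hx₁s.1 ht.1, le_trans ht.2 haIoo.2.le⟩
      have hsubo : Ioo x₁ a ⊆ Set.Ioo 0 L := fun t ht =>
        ⟨lt_of_le_of_lt hx₁s.1 ht.1, lt_trans ht.2 haIoo.2⟩
      -- reflection ρ - t
      set ρ : ℝ := x₁ + a with hρdef
      have hρmem : ∀ t ∈ Ioo x₁ a, ρ - t ∈ Ioo x₁ a := fun t ht =>
        ⟨by simp only [hρdef]; linarith [ht.2], by simp only [hρdef]; linarith [ht.1]⟩
      have hneg : ∀ t : ℝ, HasDerivAt (fun t' : ℝ => ρ - t') (-1) t := fun t => by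
        simpa using (hasDerivAt_id t).const_sub ρ
      have hloc : IsLocalMin z a := by
        have hev : ∀ᶠ y in 𝓝 a, z a ≤ z y := by
          filter_upwards [hmem a haIoo] with t ht
          rw [haz]; exact hznn t ht
        exact hev
      have hz1a : z₁ a = 0 := by rw [← (hz' a haIoo).deriv]; exact hloc.deriv_eq_zero
      apply hopf (a := x₁) (c := a) (B := Bb) (U := U) (ε := ε)
        (z := fun t => z (ρ - t)) (z₁ := fun t => -z₁ (ρ - t))
        (z₂ := fun t => z₂ (ρ - t)) (b := fun t => -b (ρ - t))
        (u := fun t => tu (ρ - t)) hε halt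
      · -- continuity
        apply ContinuousOn.comp (hz_cont.mono hsub)
          ((continuous_const.sub continuous_id).continuousOn)
        intro t ht
        exact ⟨by simp; linarith [ht.2], by simp; linarith [ht.1]⟩
      · -- derivative at left endpoint x₁ (image point is a)
        have e : ρ - x₁ = a := by simp only [hρdef]; ring
        have h1 : HasDerivAt z (z₁ (ρ - x₁)) (ρ - x₁) := by rw [e]; exact hz' a haIoo
        have h2 := h1.comp x₁ (hneg x₁)
        rw [mul_neg_one] at h2
        exact h2
      · intro t ht
        have h2 := (hz' _ (hsubo (hρmem t ht))).comp t (hneg t)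
        rw [mul_neg_one] at h2
        exact h2
      · intro t ht
        have h2 := ((hz1' _ (hsubo (hρmem t ht))).comp t (hneg t)).neg
        rw [mul_neg_one, neg_neg] at h2
        exact h2
      · intro t ht
        rw [abs_neg]
        exact hbB _ (Ioo_subset_Icc_self (hsubo (hρmem t ht)))
      · intro t ht
        exact ⟨hpos _ (Ioo_subset_Icc_self (hsubo (hρmem t ht))),
          hUb _ (Ioo_subset_Icc_self (hsubo (hρmem t ht)))⟩
      · intro t ht
        have hk := hkey _ (Ioo_subset_Icc_self (hsubo (hρmem t ht)))
        have hm1 := hm_deriv _ (Ioo_subset_Icc_self (hsubo (hρmem t ht)))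
        have : ε * z₂ (ρ - t) + -b (ρ - t) * -z₁ (ρ - t) - tu (ρ - t) * z (ρ - t)
            = ε * z₂ (ρ - t) + b (ρ - t) * z₁ (ρ - t) - tu (ρ - t) * z (ρ - t) := by ring
        rw [this, hk]
        simpa using hm1
      · -- z (ρ - x₁) = z a = 0
        have e : ρ - x₁ = a := by simp only [hρdef]; ring
        rw [e]; exact haz
      · have e : ρ - x₁ = a := by simp only [hρdef]; ring
        rw [e, hz1a, neg_zero]
      · intro t ht
        have : ρ - t ∈ Icc x₁ a := ⟨by simp only [hρdef]; linarith [ht.2], by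
          simp only [hρdef]; linarith [ht.1]⟩
        exact hznn _ (hsub this)
      · have e : ρ - a = x₁ := by simp only [hρdef]; ring
        rw [e]; exact hx₁pos
  -- z ≡ 0 contradicts m' ≢ 0
  obtain ⟨xm, hxm, hxmne⟩ := hm_ne
  apply hxmne
  have hw0 : ∀ t ∈ s, w t = 0 := by
    intro t ht
    have h := hall t ht
    simp only [hzdef] at h
    rcases div_eq_zero_iff.mp h with h' | h'
    · exact h'
    · exact absurd h' (ne_of_gt (hpos t ht))
  have hgw0 : ∀ t ∈ s, gw t = 0 := by
    intro t ht
    have h1 := (hw_deriv t ht).derivWithin (huniq t ht)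
    have h2 : HasDerivWithinAt w 0 s t :=
      (hasDerivWithinAt_const t s (0:ℝ)).congr (fun y hy => hw0 y hy) (hw0 t ht)
    have h3 := h2.derivWithin (huniq t ht)
    rw [h1] at h3; exact h3.symm ▸ rfl
  have htm : ∀ t ∈ s, tu t = m t := by
    intro t ht
    have h := hgw0 t ht
    simp only [hgwdef] at h
    rcases mul_eq_zero.mp (by field_simp at h; rw [mul_zero] at h; exact h) with h' | h'
    · exact absurd h' (ne_of_gt (hpos t ht))
    · linarith
  have : derivWithin m (Set.Icc 0 L) xm = derivWithin tu (Set.Icc 0 L) xm :=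
    derivWithin_congr (fun y hy => (htm y hy).symm) ((htm xm hxm).symm)
  rw [this]
  exact hw0 xm hxm
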